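/- Let L > 0 and let λ ∈ ℂ and φ ∈ H³(0, L) satisfy φ(0) = φ(L) = φ'(0) = 0 and −φ''' − φ' = λφ on (0, L) (i.e., φ is an eigenfunction of the adjoint linearized KdV operator). If additionally φ'(L) = 0, and L ∉ N = { 2π √((k² + kl + l²)/3) : k, l ∈ ℕ_{≥1} }, thenter φ ≡ 0 on (0, L). -/

import Mathlib

/-!
For each root `r` of the characteristic polynomial `z³ + z + λ`, the function
`φ'' + r φ' + (r² + 1) φ` solves `u' = r u`, hence equals `φ''(0) e^{rx}`; at `x = L` the four
boundary conditions turn this into `φ''(L) = φ''(0) e^{rL}`. If `φ''(0) ≠ 0` and the roots are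
simple, the three exponentials `e^{rᵢL}` coincide, so `(rᵢ - rⱼ) L ∈ 2πiℤ`, and the identity
`Σ (rᵢ - rⱼ)² = -6` makes `L` a critical length. A double root `r` instead gives
`(φ' + 2rφ)(L) = φ''(0) L e^{rL}`, which forces `φ''(0) = 0`. Finally, factoring the operator into
first-order factors shows that a solution with `φ(0) = φ'(0) = φ''(0) = 0` vanishes.
-/

open Set Polynomial Complex Real

def criticalSet : Set ℝ :=
  {x | ∃ k l : ℕ, 0 < k ∧ 0 < l ∧
    x = 2 * Real.pi * Real.sqrt (((k : ℝ) ^ 2 + k * l + l ^ 2) / 3)}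

theorem exists_vieta_X_pow_three_add_X_add_C (lam : ℂ) :
    ∃ r₁ r₂ r₃ : ℂ, r₁ + r₂ + r₃ = 0 ∧ r₁ * r₂ + r₁ * r₃ + r₂ * r₃ = 1 ∧ r₁ * r₂ * r₃ = -lam := by
  have h₃ : (X ^ 3 + X + C lam : ℂ[X]).degree = 3 := by compute_degree!
  obtain ⟨r₁, hr₁⟩ := Complex.exists_root (by rw [h₃]; norm_num)
  have h₂ : (X ^ 2 + C r₁ * X + C (r₁ ^ 2 + 1) : ℂ[X]).degree = 2 := by compute_degree!
  obtain ⟨r₂, hr₂⟩ := Complex.exists_root (by rw [h₂]; norm_num)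
  simp only [IsRoot, eval_add, eval_pow, eval_X, eval_C, eval_mul] at hr₁ hr₂
  exact ⟨r₁, r₂, -r₁ - r₂, by ring, by linear_combination -hr₂,
    by linear_combination -r₁ * hr₂ + hr₁⟩

theorem Int.exists_nat_sq_add_mul_add_sq_eq_of_mul_pos {k l : ℤ} (h : 0 < k * l) :
    ∃ m n : ℕ, 0 < m ∧ 0 < n ∧ k ^ 2 + k * l + l ^ 2 = (m : ℤ) ^ 2 + m * n + n ^ 2 := by
  refine ⟨k.natAbs, l.natAbs, Int.natAbs_pos.2 (left_ne_zero_of_mul h.ne'),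
    Int.natAbs_pos.2 (right_ne_zero_of_mul h.ne'), ?_⟩
  simp only [Int.natCast_natAbs, sq_abs, ← abs_mul, abs_of_pos h]

theorem Int.exists_nat_sq_add_mul_add_sq_eq {k l : ℤ} (hk : k ≠ 0) (hl : l ≠ 0)
    (hkl : k + l ≠ 0) :
    ∃ m n : ℕ, 0 < m ∧ 0 < n ∧ k ^ 2 + k * l + l ^ 2 = (m : ℤ) ^ 2 + m * n + n ^ 2 := by
  -- the form is invariant under `(k, l) ↦ (k + l, -l)` and `(k, l) ↦ (-k, k + l)`, and two of
  -- `k`, `l`, `-(k + l)` have the same sign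
  have hpos : 0 < k * l ∨ 0 < (k + l) * -l ∨ 0 < -k * (k + l) := by
    rcases lt_or_gt_of_ne hk with hk | hk <;> rcases lt_or_gt_of_ne hl with hl | hl <;>
      rcases lt_or_gt_of_ne hkl with h | h <;>
      first
        | exact Or.inl (by nlinarith)
        | exact Or.inr (Or.inl (by nlinarith))
        | exact Or.inr (Or.inr (by nlinarith))
  rcases hpos with h | h | h <;>
    obtain ⟨m, n, hm, hn, hmn⟩ := exists_nat_sq_add_mul_add_sq_eq_of_mul_pos h
  · exact ⟨m, n, hm, hn, hmn⟩
  · exact ⟨m, n, hm, hn, by linear_combination hmn⟩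
  · exact ⟨m, n, hm, hn, by linear_combination hmn⟩

theorem mem_criticalSet_of_three_mul_sq_eq {L : ℝ} (hL : 0 < L) {k l : ℤ} (hk : k ≠ 0)
    (hl : l ≠ 0) (hkl : k + l ≠ 0) (h : 3 * L ^ 2 = (2 * π) ^ 2 * (k ^ 2 + k * l + l ^ 2)) :
    L ∈ criticalSet := by
  obtain ⟨m, n, hm, hn, hmn⟩ := Int.exists_nat_sq_add_mul_add_sq_eq hk hl hkl
  have hmn' : ((k : ℝ) ^ 2 + k * l + l ^ 2) = (m : ℝ) ^ 2 + m * n + n ^ 2 := by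
    exact_mod_cast hmn
  refine ⟨m, n, hm, hn, ?_⟩
  rw [← Real.sqrt_sq (by positivity : 0 ≤ 2 * π), ← Real.sqrt_mul (sq_nonneg _), ← hmn',
    ← Real.sqrt_sq hL.le]
  congr 1
  linear_combination h / 3

theorem mem_criticalSet_of_cexp_eq {L : ℝ} (hL : 0 < L) {r₁ r₂ r₃ : ℂ}
    (hsum : r₁ + r₂ + r₃ = 0) (hprod : r₁ * r₂ + r₁ * r₃ + r₂ * r₃ = 1) (h₁₂ : r₁ ≠ r₂)
    (h₂₃ : r₂ ≠ r₃) (h₁₃ : r₁ ≠ r₃) (e₁₂ : cexp (r₁ * L) = cexp (r₂ * L))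
    (e₂₃ : cexp (r₂ * L) = cexp (r₃ * L)) :
    L ∈ criticalSet := by
  obtain ⟨k, hk⟩ := exp_eq_exp_iff_exists_int.1 e₁₂
  obtain ⟨l, hl⟩ := exp_eq_exp_iff_exists_int.1 e₂₃
  have hL' : (L : ℂ) ≠ 0 := ofReal_ne_zero.2 hL.ne'
  have hk0 : k ≠ 0 := by
    rintro rfl
    exact h₁₂ (mul_right_cancel₀ hL' (by simpa using hk))
  have hl0 : l ≠ 0 := by
    rintro rfl
    exact h₂₃ (mul_right_cancel₀ hL' (by simpa using hl))
  have hkl0 : k + l ≠ 0 := by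
    intro h
    have h' : (k : ℂ) + l = 0 := by exact_mod_cast h
    exact h₁₃ (mul_right_cancel₀ hL' (by linear_combination hk + hl + 2 * π * I * h'))
  -- `(r₁ - r₂)² + (r₂ - r₃)² + (r₁ - r₃)² = 2 (r₁ + r₂ + r₃)² - 6 (r₁ r₂ + r₁ r₃ + r₂ r₃) = -6`
  have hC : 3 * (L : ℂ) ^ 2 = (2 * π) ^ 2 * ((k : ℂ) ^ 2 + k * l + l ^ 2) := by
    set x := (r₁ - r₂) * L
    set y := (r₂ - r₃) * L
    set p := k * (2 * π * I)
    set q := l * (2 * π * I)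
    linear_combination (L : ℂ) ^ 2 * ((r₁ + r₂ + r₃) * hsum - 3 * hprod)
      - (hk * (2 * x + y + 2 * p + q) + hl * (x + 2 * y + p + 2 * q)) / 2
      - (2 * π) ^ 2 * ((k : ℂ) ^ 2 + k * l + l ^ 2) * I_sq
  exact mem_criticalSet_of_three_mul_sq_eq hL hk0 hl0 hkl0 (by exact_mod_cast hC)

theorem eq_mul_cexp_of_hasDerivAt_eq {f : ℝ → ℂ} {r c : ℂ} {L : ℝ}
    (hf : ∀ x ∈ Icc 0 L, HasDerivAt f (r * f x + c * cexp (r * x)) x) :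
    ∀ x ∈ Icc 0 L, f x = (f 0 + c * x) * cexp (r * x) := by
  have hinv (x : ℝ) : cexp (-r * x) * cexp (r * x) = 1 := by rw [← Complex.exp_add]; simp
  have hg : ∀ x ∈ Icc 0 L, HasDerivAt (fun y : ℝ => cexp (-r * y) * f y - c * y) 0 x := by
    intro x hx
    have he : HasDerivAt (fun y : ℝ => cexp (-r * y)) (-r * cexp (-r * x)) x := by
      simpa [mul_comm] using ((hasDerivAt_id x).ofReal_comp.const_mul (-r)).cexp
    refine ((he.mul (hf x hx)).sub ((hasDerivAt_id x).ofReal_comp.const_mul c)).congr_deriv ?_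
    linear_combination c * hinv x - c * ofReal_one
  intro x hx
  have hconst := constant_of_has_deriv_right_zero
    (fun y hy => (hg y hy).continuousAt.continuousWithinAt)
    (fun y hy => (hg y (Ico_subset_Icc_self hy)).hasDerivWithinAt) x hx
  simp only [ofReal_zero, mul_zero, Complex.exp_zero, one_mul, sub_zero] at hconst
  linear_combination cexp (r * x) * hconst - f x * hinv x

theorem ContDiff.hasDerivAt_iteratedDeriv {𝕜 F : Type*} [NontriviallyNormedField 𝕜]
    [NormedAddCommGroup F] [NormedSpace 𝕜 F] {f : 𝕜 → F} {n : WithTop ℕ∞} {k : ℕ}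
    (hf : ContDiff 𝕜 n f) (hk : k < n) (x : 𝕜) :
    HasDerivAt (iteratedDeriv k f) (iteratedDeriv (k + 1) f x) x := by
  rw [iteratedDeriv_succ]
  exact (hf.differentiable_iteratedDeriv k hk x).hasDerivAt

theorem ContDiff.hasDerivAt_deriv {𝕜 F : Type*} [NontriviallyNormedField 𝕜]
    [NormedAddCommGroup F] [NormedSpace 𝕜 F] {f : 𝕜 → F} {n : WithTop ℕ∞}
    (hf : ContDiff 𝕜 n f) (hn : 2 ≤ n) (x : 𝕜) :
    HasDerivAt (deriv f) (iteratedDeriv 2 f x) x := by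
  simpa using hf.hasDerivAt_iteratedDeriv (k := 1) (lt_of_lt_of_le (by norm_num) hn) x

section Eigenfunction

variable {L : ℝ} {lam : ℂ} {φ : ℝ → ℂ}

theorem iteratedDeriv_three_eq_of_eqOn_Ioo (hL : 0 < L) (hφ : ContDiff ℝ 3 φ)
    (heq : ∀ x ∈ Ioo 0 L, -iteratedDeriv 3 φ x - deriv φ x = lam * φ x) :
    ∀ x ∈ Icc 0 L, iteratedDeriv 3 φ x = -deriv φ x - lam * φ x := by
  have hφ₁ : Continuous (deriv φ) := hφ.continuous_deriv (by norm_num)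
  have hext : EqOn (fun x => -iteratedDeriv 3 φ x - deriv φ x) (fun x => lam * φ x) (Icc 0 L) :=
    EqOn.of_subset_closure heq
      (((hφ.continuous_iteratedDeriv 3 le_rfl).neg.sub hφ₁).continuousOn)
      (continuous_const.mul hφ.continuous).continuousOn Ioo_subset_Icc_self
      (closure_Ioo hL.ne).ge
  exact fun x hx => by linear_combination -hext hx

theorem iteratedDeriv_two_add_eq_mul_cexp (hφ : ContDiff ℝ 3 φ)
    (hode : ∀ x ∈ Icc 0 L, iteratedDeriv 3 φ x = -deriv φ x - lam * φ x) {r : ℂ}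
    (hr : r ^ 3 + r + lam = 0) :
    ∀ x ∈ Icc 0 L, iteratedDeriv 2 φ x + r * deriv φ x + (r ^ 2 + 1) * φ x =
      (iteratedDeriv 2 φ 0 + r * deriv φ 0 + (r ^ 2 + 1) * φ 0) * cexp (r * x) := by
  have h := eq_mul_cexp_of_hasDerivAt_eq (c := 0)
    (f := fun x => iteratedDeriv 2 φ x + r * deriv φ x + (r ^ 2 + 1) * φ x) fun x hx => by
      refine (((hφ.hasDerivAt_iteratedDeriv (k := 2) (by norm_num) x).add
        ((hφ.hasDerivAt_deriv (by norm_num) x).const_mul r)).add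
        ((hφ.differentiable (by norm_num) x).hasDerivAt.const_mul _)).congr_deriv ?_
      linear_combination hode x hx - φ x * hr
  simpa using h

theorem iteratedDeriv_two_eq_zero_of_multiple_root (hL : 0 < L) (hφ : ContDiff ℝ 3 φ)
    (hode : ∀ x ∈ Icc 0 L, iteratedDeriv 3 φ x = -deriv φ x - lam * φ x)
    (h0 : φ 0 = 0) (hd0 : deriv φ 0 = 0) (hLv : φ L = 0) (hdL : deriv φ L = 0) {r : ℂ}
    (hr : r ^ 3 + r + lam = 0) (hr' : 3 * r ^ 2 + 1 = 0) :
    iteratedDeriv 2 φ 0 = 0 := by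
  have hf (x : ℝ) (hx : x ∈ Icc 0 L) : iteratedDeriv 2 φ x + r * deriv φ x + (r ^ 2 + 1) * φ x =
      iteratedDeriv 2 φ 0 * cexp (r * x) := by
    simpa [h0, hd0] using iteratedDeriv_two_add_eq_mul_cexp hφ hode hr x hx
  -- the characteristic polynomial is `(z - r)² (z + 2r)`, so `φ' + 2rφ` solves
  -- `u' = r u + φ''(0) e^{rx}`
  have hu := eq_mul_cexp_of_hasDerivAt_eq (r := r) (c := iteratedDeriv 2 φ 0)
    (f := fun x => deriv φ x + 2 * r * φ x) fun x hx => by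
      refine ((hφ.hasDerivAt_deriv (by norm_num) x).add
        ((hφ.differentiable (by norm_num) x).hasDerivAt.const_mul _)).congr_deriv ?_
      linear_combination hf x hx - φ x * hr'
  simpa [h0, hd0, hLv, hdL, hL.ne', Complex.exp_ne_zero] using hu L ⟨hL.le, le_rfl⟩

theorem eq_zero_of_iteratedDeriv_two_eq_zero (hφ : ContDiff ℝ 3 φ)
    (hode : ∀ x ∈ Icc 0 L, iteratedDeriv 3 φ x = -deriv φ x - lam * φ x)
    (h0 : φ 0 = 0) (hd0 : deriv φ 0 = 0) (h2 : iteratedDeriv 2 φ 0 = 0) :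
    ∀ x ∈ Icc 0 L, φ x = 0 := by
  obtain ⟨r₁, r₂, r₃, hsum, hprod, hprod₃⟩ := exists_vieta_X_pow_three_add_X_add_C lam
  have hf (x : ℝ) (hx : x ∈ Icc 0 L) :
      iteratedDeriv 2 φ x + r₁ * deriv φ x + (r₁ ^ 2 + 1) * φ x = 0 := by
    simpa [h0, hd0, h2] using iteratedDeriv_two_add_eq_mul_cexp hφ hode
      (by linear_combination r₁ ^ 2 * hsum - r₁ * hprod + hprod₃) x hx
  -- `z ^ 2 + r₁ z + r₁ ^ 2 + 1 = (z - r₂) (z - r₃)`, so `φ' - r₃ φ` solves `u' = r₂ u`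
  have hg (x : ℝ) (hx : x ∈ Icc 0 L) : deriv φ x - r₃ * φ x = 0 := by
    simpa [h0, hd0] using eq_mul_cexp_of_hasDerivAt_eq (r := r₂) (c := 0)
      (f := fun x => deriv φ x - r₃ * φ x) (fun x hx => by
        refine ((hφ.hasDerivAt_deriv (by norm_num) x).sub
          ((hφ.differentiable (by norm_num) x).hasDerivAt.const_mul _)).congr_deriv ?_
        linear_combination hf x hx + (-deriv φ x - r₁ * φ x) * hsum + φ x * hprod) x hx
  intro x hx
  simpa [h0] using eq_mul_cexp_of_hasDerivAt_eq (r := r₃) (c := 0) (f := φ) (fun x hx =>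
    (hφ.differentiable (by norm_num) x).hasDerivAt.congr_deriv
      (by linear_combination hg x hx)) x hx

theorem iteratedDeriv_two_eq_zero_of_not_mem_criticalSet (hL : 0 < L) (hLN : L ∉ criticalSet)
    (hφ : ContDiff ℝ 3 φ)
    (hode : ∀ x ∈ Icc 0 L, iteratedDeriv 3 φ x = -deriv φ x - lam * φ x)
    (h0 : φ 0 = 0) (hd0 : deriv φ 0 = 0) (hLv : φ L = 0) (hdL : deriv φ L = 0) :
    iteratedDeriv 2 φ 0 = 0 := by
  obtain ⟨r₁, r₂, r₃, hsum, hprod, hprod₃⟩ := exists_vieta_X_pow_three_add_X_add_C lam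
  have hroot (r : ℂ) (h : (r - r₁) * (r - r₂) * (r - r₃) = 0) : r ^ 3 + r + lam = 0 := by
    linear_combination h + r ^ 2 * hsum - r * hprod + hprod₃
  by_cases hdist : r₁ ≠ r₂ ∧ r₂ ≠ r₃ ∧ r₁ ≠ r₃
  · obtain ⟨h₁₂, h₂₃, h₁₃⟩ := hdist
    by_contra ha
    have hφL (r : ℂ) (h : (r - r₁) * (r - r₂) * (r - r₃) = 0) :
        iteratedDeriv 2 φ L = iteratedDeriv 2 φ 0 * cexp (r * L) := by
      simpa [h0, hd0, hLv, hdL] using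
        iteratedDeriv_two_add_eq_mul_cexp hφ hode (hroot r h) L ⟨hL.le, le_rfl⟩
    refine hLN (mem_criticalSet_of_cexp_eq hL hsum hprod h₁₂ h₂₃ h₁₃ ?_ ?_) <;>
      refine mul_left_cancel₀ ha ((hφL _ (by ring)).symm.trans (hφL _ (by ring)))
  · simp only [not_and_or, not_not] at hdist
    rcases hdist with rfl | rfl | rfl
    · exact iteratedDeriv_two_eq_zero_of_multiple_root hL hφ hode h0 hd0 hLv hdL
        (hroot r₁ (by ring)) (by linear_combination 2 * r₁ * hsum - hprod)
    · exact iteratedDeriv_two_eq_zero_of_multiple_root hL hφ hode h0 hd0 hLv hdL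
        (hroot r₂ (by ring)) (by linear_combination 2 * r₂ * hsum - hprod)
    · exact iteratedDeriv_two_eq_zero_of_multiple_root hL hφ hode h0 hd0 hLv hdL
        (hroot r₁ (by ring)) (by linear_combination 2 * r₁ * hsum - hprod)

end Eigenfunction

/-- Spectral unique continuation (Rosier): if `L` is not a critical length, any
eigenfunction `φ` of `φ ↦ −φ''' − φ'` with `φ(0) = φ(L) = φ'(0) = 0` that also
satisfies `φ'(L) = 0` vanishes identically on `(0, L)`. -/
theorem stmt7 (L : ℝ) (hL : 0 < L) (hLN : L ∉ criticalSet) (lam : ℂ) (φ : ℝ → ℂ)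
    (hφ : ContDiff ℝ 3 φ) (h0 : φ 0 = 0) (hLv : φ L = 0) (hd0 : deriv φ 0 = 0)
    (heq : ∀ x ∈ Set.Ioo (0:ℝ) L, -iteratedDeriv 3 φ x - deriv φ x = lam * φ x)
    (hdL : deriv φ L = 0) :
    ∀ x ∈ Set.Ioo (0:ℝ) L, φ x = 0 := by
  have hode := iteratedDeriv_three_eq_of_eqOn_Ioo hL hφ heq
  have h2 := iteratedDeriv_two_eq_zero_of_not_mem_criticalSet hL hLN hφ hode h0 hd0 hLv hdL
  exact fun x hx =>
    eq_zero_of_iteratedDeriv_two_eq_zero hφ hode h0 hd0 h2 x (Ioo_subset_Icc_self hx)
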